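/- Let 0 < β ≤ σ with β < 1/2. Then the ratio γ_{β,σ} = C_σ / C_{β,σ} satisfies 1 ≤ γ_{β,σ} ≤ 1/(1 − 2β). -/

import Mathlib

open MeasureTheory

/-- Standard Gaussian density `φ(t) = e^{-t²/2}/√(2π)`. -/
noncomputable def gaussPDF (t : ℝ) : ℝ := Real.exp (-t ^ 2 / 2) / Real.sqrt (2 * Real.pi)

/-- Standard Gaussian cumulative distribution function `Φ`. -/
noncomputable def gaussCDF (x : ℝ) : ℝ := ∫ t in Set.Iic x, gaussPDF t

/-- `C_σ = Φ(1/(2σ)) − Φ(−1/(2σ))`. -/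
noncomputable def Csigma (σ : ℝ) : ℝ := gaussCDF (1 / (2 * σ)) - gaussCDF (-(1 / (2 * σ)))

/-- `C_{β,σ} = Φ((1/2 − β)/σ) − Φ((−1/2 − β)/σ)`. -/
noncomputable def Cbetasigma (β σ : ℝ) : ℝ :=
  gaussCDF ((1 / 2 - β) / σ) - gaussCDF ((-(1 / 2) - β) / σ)

/-- `γ_{β,σ} = C_σ / C_{β,σ}`. -/
noncomputable def gammaBS (β σ : ℝ) : ℝ := Csigma σ / Cbetasigma β σ

/-- Density of the truncated Gaussian distribution `N^T(μ, σ², [−1/2, 1/2])`. -/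
noncomputable def truncPDF (μ σ : ℝ) (z : ℝ) : ℝ :=
  if z ∈ Set.Icc (-(1 / 2) : ℝ) (1 / 2) then
    gaussPDF ((z - μ) / σ) /
      (σ * (gaussCDF ((1 / 2 - μ) / σ) - gaussCDF ((-(1 / 2) - μ) / σ)))
  else 0

lemma continuous_gaussPDF : Continuous gaussPDF := by
  unfold gaussPDF
  fun_prop

lemma gaussPDF_pos (t : ℝ) : 0 < gaussPDF t :=
  div_pos (Real.exp_pos _) (Real.sqrt_pos.mpr (by positivity))

lemma gaussPDF_le {s t : ℝ} (h : s ^ 2 ≤ t ^ 2) : gaussPDF t ≤ gaussPDF s := by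
  unfold gaussPDF
  have hsq : (0:ℝ) < Real.sqrt (2 * Real.pi) := Real.sqrt_pos.mpr (by positivity)
  apply div_le_div_of_nonneg_right ?_ hsq.le
  exact Real.exp_le_exp.mpr (by linarith)

lemma integrable_gaussPDF : Integrable gaussPDF := by
  have h : Integrable (fun x : ℝ => Real.exp (-(1/2) * x ^ 2)) :=
    integrable_exp_neg_mul_sq (by norm_num)
  have heq : gaussPDF = fun x => Real.exp (-(1/2) * x ^ 2) / Real.sqrt (2 * Real.pi) := by
    funext t; unfold gaussPDF; ring_nf
  rw [heq]
  exact h.div_const _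

lemma gaussPDF_intervalIntegrable (a b : ℝ) : IntervalIntegrable gaussPDF volume a b :=
  continuous_gaussPDF.intervalIntegrable a b

lemma gaussCDF_sub (a b : ℝ) : gaussCDF b - gaussCDF a = ∫ t in a..b, gaussPDF t :=
  intervalIntegral.integral_Iic_sub_Iic integrable_gaussPDF.integrableOn integrable_gaussPDF.integrableOn

lemma gaussPDF_even (x : ℝ) : gaussPDF (-x) = gaussPDF x := by simp [gaussPDF]

theorem gamma_ratio_bounds (β σ : ℝ) (hβ : 0 < β) (hβσ : β ≤ σ) (hβhalf : β < 1 / 2) :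
    1 ≤ gammaBS β σ ∧ gammaBS β σ ≤ 1 / (1 - 2 * β) := by
  have hσ : 0 < σ := lt_of_lt_of_le hβ hβσ
  set h : ℝ := 1 / (2 * σ) with hh
  set c : ℝ := β / σ with hc
  have hhpos : 0 < h := by positivity
  have hcpos : 0 < c := div_pos hβ hσ
  have hch : c ≤ h := by
    rw [hc, hh, div_le_div_iff₀ hσ (by positivity)]
    nlinarith
  have hch' : c < 2 * h := by
    rw [hc, hh] at *
    rw [div_lt_iff₀ hσ] at *
    have : 2 * (1 / (2 * σ)) * σ = 1 := by field_simp
    rw [this]; linarith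
  have II := gaussPDF_intervalIntegrable
  -- rewrite the constants as interval integrals
  have hCs : Csigma σ = ∫ t in (-h)..h, gaussPDF t := by
    rw [Csigma, gaussCDF_sub]
  have hCb : Cbetasigma β σ = ∫ t in (-h - c)..(h - c), gaussPDF t := by
    rw [Cbetasigma, gaussCDF_sub]
    congr 1 <;> (rw [hh, hc]; field_simp)
  have hCspos : 0 < Csigma σ := by
    rw [hCs]
    exact intervalIntegral.intervalIntegral_pos_of_pos (II _ _) gaussPDF_pos (by linarith)
  -- key 1 : Cbetasigma ≤ Csigma
  have key1 : Cbetasigma β σ ≤ Csigma σ := by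
    rw [hCs, hCb,
      ← intervalIntegral.integral_add_adjacent_intervals (II (-h) (h - c)) (II (h - c) h),
      ← intervalIntegral.integral_add_adjacent_intervals (II (-h - c) (-h)) (II (-h) (h - c))]
    have neg_piece : (∫ t in (-h - c)..(-h), gaussPDF t) = ∫ t in h..(h + c), gaussPDF t := by
      have e1 : (∫ t in h..(h + c), gaussPDF t) = ∫ t in h..(h + c), gaussPDF (-t) := by
        simp [gaussPDF_even]
      rw [e1, intervalIntegral.integral_comp_neg]
      congr 1 <;> ring
    have shift : (∫ t in h..(h + c), gaussPDF t)
        = ∫ t in (h - c)..h, gaussPDF (t + c) := by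
      rw [intervalIntegral.integral_comp_add_right]
      congr 1 <;> ring
    have mono : (∫ t in (h - c)..h, gaussPDF (t + c)) ≤ ∫ t in (h - c)..h, gaussPDF t := by
      apply intervalIntegral.integral_mono_on (by linarith)
      · exact (continuous_gaussPDF.comp (continuous_id.add continuous_const)).intervalIntegrable _ _
      · exact II _ _
      · intro x hx
        apply gaussPDF_le
        have hx0 : 0 ≤ x := le_trans (by linarith) hx.1
        nlinarith
    have : (∫ t in (-h - c)..(-h), gaussPDF t) ≤ ∫ t in (h - c)..h, gaussPDF t := by
      rw [neg_piece, shift]; exact mono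
    linarith
  -- key 2 : (1 - 2β) * Csigma ≤ Cbetasigma
  have hl : (0:ℝ) < 1 - 2 * β := by linarith
  have hlh : (1 - 2 * β) * h = h - c := by
    rw [hh, hc]; field_simp
  have key2 : (1 - 2 * β) * Csigma σ ≤ Cbetasigma β σ := by
    have scale : (∫ t in (-(h - c))..(h - c), gaussPDF t)
        = (1 - 2 * β) * ∫ t in (-h)..h, gaussPDF ((1 - 2 * β) * t) := by
      rw [intervalIntegral.integral_comp_mul_left _ (ne_of_gt hl), smul_eq_mul,
        ← mul_assoc, mul_inv_cancel₀ (ne_of_gt hl), one_mul]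
      congr 1 <;> (rw [← hlh]; try ring)
    have mono : (∫ t in (-h)..h, gaussPDF t) ≤ ∫ t in (-h)..h, gaussPDF ((1 - 2 * β) * t) := by
      apply intervalIntegral.integral_mono_on (by linarith)
      · exact II _ _
      · exact (continuous_gaussPDF.comp (continuous_const.mul continuous_id)).intervalIntegrable _ _
      · intro x hx
        apply gaussPDF_le
        nlinarith [sq_nonneg x, mul_nonneg (mul_nonneg hβ.le (show (0:ℝ) ≤ 1 - β by linarith)) (sq_nonneg x)]
    have sub1 : (∫ t in (-(h - c))..(h - c), gaussPDF t) ≤ ∫ t in (-h - c)..(h - c), gaussPDF t := by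
      rw [← intervalIntegral.integral_add_adjacent_intervals (II (-h - c) (-(h - c)))
        (II (-(h - c)) (h - c))]
      have nn : 0 ≤ ∫ t in (-h - c)..(-(h - c)), gaussPDF t :=
        intervalIntegral.integral_nonneg (by linarith) (fun x _ => (gaussPDF_pos x).le)
      linarith
    calc (1 - 2 * β) * Csigma σ ≤ (1 - 2 * β) * ∫ t in (-h)..h, gaussPDF ((1 - 2 * β) * t) := by
          rw [hCs]; exact mul_le_mul_of_nonneg_left mono hl.le
      _ = ∫ t in (-(h - c))..(h - c), gaussPDF t := scale.symm
      _ ≤ ∫ t in (-h - c)..(h - c), gaussPDF t := sub1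
      _ = Cbetasigma β σ := hCb.symm
  have hCbpos : 0 < Cbetasigma β σ := lt_of_lt_of_le (by positivity) key2
  constructor
  · rw [gammaBS, one_le_div hCbpos]; exact key1
  · rw [gammaBS, div_le_div_iff₀ hCbpos hl]
    linarith
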